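/- arXiv:1303.5278 — 2 statements merged into one kernel-verified Lean document; each statement's English description precedes it below -/
import Mathlib

section
/- Every connected finite graph (possibly with loops and multi-edges) in which either some loop exists, or some 3-cycle exists, contains a 'maximal tree with 1- or 3-cycle': a subset of edges consisting of a maximal (spanning) tree together with one additional edge that is either a loop or forms a 3-cycle with two tree edges. -/
/-! Seed a tree with the vertex of the loop, or with two edges of the triangle, and grow it into
a spanning tree by repeatedly attaching an edge that leaves the current vertex set; such an edge
exists by connectedness. Every attached edge has an endpoint outside the seed, whereas the loop,
resp. the third edge of the triangle, has both ends in it: so it is never attached and serves as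
the extra edge. -/

/-- Two vertices are joined by an edge from the set `S` of edges of a multigraph
with edge-endpoint map `ends`. -/
def EdgeStep {V E : Type} (ends : E → Sym2 V) (S : Set E) (u v : V) : Prop :=
  ∃ e ∈ S, ends e = s(u, v)

/-- The edge set `S` connects the whole vertex set. (The step relation is symmetric
since `s(u,v) = s(v,u)`, so its reflexive-transitive closure is the reachability
relation.) -/
def ConnectsAll {V E : Type} (ends : E → Sym2 V) (S : Set E) : Prop :=
  ∀ u v : V, Relation.ReflTransGen (EdgeStep ends S) u v

/-- A spanning (maximal) tree of a connected finite multigraph: a set of edges that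
connects all vertices and has exactly `|V| - 1` edges. -/
def IsSpanningTree {V E : Type} [Fintype V] (ends : E → Sym2 V) (T : Finset E) : Prop :=
  ConnectsAll ends (↑T : Set E) ∧ T.card = Fintype.card V - 1

/-- The edge `e` forms a 3-cycle together with two edges of `T`. -/
def FormsThreeCycle {V E : Type} (ends : E → Sym2 V) (T : Finset E) (e : E) : Prop :=
  ∃ u v w : V, u ≠ v ∧ v ≠ w ∧ u ≠ w ∧ ends e = s(u, v) ∧
    ∃ e₁ ∈ T, ∃ e₂ ∈ T, ends e₁ = s(v, w) ∧ ends e₂ = s(w, u)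

theorem Relation.ReflTransGen.exists_crossing {α : Type*} {r : α → α → Prop} {p : α → Prop}
    {a b : α} (h : Relation.ReflTransGen r a b) (ha : p a) (hb : ¬p b) :
    ∃ x y, r x y ∧ p x ∧ ¬p y := by
  induction h with
  | refl => exact absurd ha hb
  | @tail c d _ hcd ih =>
    by_cases hc : p c
    · exact ⟨c, d, hcd, hc, hb⟩
    · exact ih hc

section Multigraph

variable {V E : Type} {ends : E → Sym2 V}

instance {S : Set E} : Std.Symm (EdgeStep ends S) :=
  ⟨fun _ _ ⟨e, he, hends⟩ => ⟨e, he, hends.trans Sym2.eq_swap⟩⟩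

theorem EdgeStep.mono {S S' : Set E} (hS : S ⊆ S') : EdgeStep ends S ≤ EdgeStep ends S' :=
  fun _ _ ⟨e, he, hends⟩ => ⟨e, hS he, hends⟩

/-- A tree on the vertex set `C`; counting `T.card + 1 = C.card` also forces `C` nonempty. -/
structure IsTreeOn (ends : E → Sym2 V) (C : Finset V) (T : Finset E) : Prop where
  ends_subset : ∀ f ∈ T, ∀ x ∈ ends f, x ∈ C
  card_add_one : T.card + 1 = C.card
  connects : ∀ x ∈ C, ∀ y ∈ C, Relation.ReflTransGen (EdgeStep ends (T : Set E)) x y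

namespace IsTreeOn

theorem singleton (v : V) : IsTreeOn ends {v} ∅ where
  ends_subset := by simp
  card_add_one := by simp
  connects := by simp [Relation.ReflTransGen.refl]

theorem isSpanningTree [Fintype V] {T : Finset E} (h : IsTreeOn ends Finset.univ T) :
    IsSpanningTree ends T :=
  ⟨fun x y => h.connects x (Finset.mem_univ x) y (Finset.mem_univ y), by
    rw [← Finset.card_univ, ← h.card_add_one, Nat.add_sub_cancel]⟩

variable [DecidableEq V] [DecidableEq E] {C : Finset V} {T : Finset E}

theorem extend (h : IsTreeOn ends C T) {e : E} {a b : V} (he : ends e = s(a, b)) (ha : a ∈ C)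
    (hb : b ∉ C) : IsTreeOn ends (insert b C) (insert e T) := by
  have heT : e ∉ T := fun heT => hb (h.ends_subset e heT b (he ▸ Sym2.mem_mk_right a b))
  have hmono := Relation.ReflTransGen.mono (EdgeStep.mono (ends := ends)
    (Finset.coe_subset.2 (Finset.subset_insert e T)))
  have hab : Relation.ReflTransGen (EdgeStep ends (insert e T : Finset E)) a b :=
    .single ⟨e, by simp, he⟩
  have hto_b : ∀ x ∈ C, Relation.ReflTransGen (EdgeStep ends (insert e T : Finset E)) x b :=
    fun x hx => (hmono _ _ (h.connects x hx a ha)).trans hab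
  refine ⟨?_, ?_, ?_⟩
  · simp only [Finset.mem_insert, forall_eq_or_imp, he, Sym2.mem_iff]
    exact ⟨⟨.inr ha, fun _ => .inl⟩, fun f hf x hx => .inr (h.ends_subset f hf x hx)⟩
  · rw [Finset.card_insert_of_notMem heT, Finset.card_insert_of_notMem hb, h.card_add_one]
  · simp only [Finset.mem_insert, forall_eq_or_imp]
    exact ⟨⟨.refl, fun y hy => symm (hto_b y hy)⟩,
      fun x hx => ⟨hto_b x hx, fun y hy => hmono _ _ (h.connects x hx y hy)⟩⟩

theorem exists_isSpanningTree_superset [Fintype V] (hconn : ConnectsAll ends Set.univ)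
    (h : IsTreeOn ends C T) :
    ∃ T', T ⊆ T' ∧ IsSpanningTree ends T' ∧ ∀ f ∈ T', (∀ x ∈ ends f, x ∈ C) → f ∈ T := by
  induction hn : Fintype.card V - C.card generalizing C T with
  | zero =>
    have hC : C = Finset.univ := Finset.eq_univ_of_card C (by have := C.card_le_univ; omega)
    subst hC
    exact ⟨T, subset_rfl, h.isSpanningTree, fun f hf _ => hf⟩
  | succ n ih =>
    obtain ⟨z, hz⟩ : ∃ z, z ∉ C := by
      by_contra! hall
      rw [Finset.eq_univ_iff_forall.2 hall, Finset.card_univ, Nat.sub_self] at hn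
      omega
    obtain ⟨r, hr⟩ : C.Nonempty := Finset.card_pos.1 (by rw [← h.card_add_one]; omega)
    obtain ⟨a, b, ⟨e, -, he⟩, ha, hb⟩ := (hconn r z).exists_crossing (p := (· ∈ C)) hr hz
    obtain ⟨T', hsub, hT', hnew⟩ :=
      ih (h.extend he ha hb) (by rw [Finset.card_insert_of_notMem hb]; omega)
    refine ⟨T', (Finset.subset_insert e T).trans hsub, hT', fun f hf hfC => ?_⟩
    obtain rfl | hfT := Finset.mem_insert.1
      (hnew f hf fun x hx => Finset.mem_insert_of_mem (hfC x hx))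
    · exact absurd (hfC b (he ▸ Sym2.mem_mk_right a b)) hb
    · exact hfT

end IsTreeOn

end Multigraph

theorem exists_maximal_tree_with_one_or_three_cycle_general
    {V E : Type} [Fintype V]
    (ends : E → Sym2 V)
    (hconn : ConnectsAll ends (Set.univ : Set E))
    (hcyc : (∃ e : E, (ends e).IsDiag) ∨
      (∃ (u v w : V) (e₁ e₂ e₃ : E), u ≠ v ∧ v ≠ w ∧ u ≠ w ∧
        ends e₁ = s(u, v) ∧ ends e₂ = s(v, w) ∧ ends e₃ = s(w, u))) :
    ∃ (T : Finset E) (e : E), e ∉ T ∧ IsSpanningTree ends T ∧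
      ((ends e).IsDiag ∨ FormsThreeCycle ends T e) := by
  classical
  rcases hcyc with ⟨e, hdiag⟩ | ⟨u, v, w, e₁, e₂, e₃, huv, hvw, huw, h₁, h₂, h₃⟩
  · obtain ⟨v, hv⟩ : ∃ v, ends e = s(v, v) := ⟨_, (Sym2.diag_diagElem hdiag).symm⟩
    obtain ⟨T, -, hT, hnew⟩ := (IsTreeOn.singleton v).exists_isSpanningTree_superset hconn
    refine ⟨T, e, fun he => ?_, hT, .inl hdiag⟩
    simpa using hnew e he (by simp [hv])
  · have hpath : IsTreeOn ends {u, v, w} {e₃, e₂} :=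
      ((IsTreeOn.singleton w).extend (h₂.trans Sym2.eq_swap) (by simp)
        (by simpa using hvw)).extend h₃ (by simp) (by simp [huv, huw])
    obtain ⟨T, hsub, hT, hnew⟩ := hpath.exists_isSpanningTree_superset hconn
    refine ⟨T, e₁, fun he₁ => ?_, hT, .inr ⟨u, v, w, huv, hvw, huw, h₁,
      e₂, hsub (by simp), e₃, hsub (by simp), h₂, h₃⟩⟩
    obtain rfl | rfl : e₁ = e₃ ∨ e₁ = e₂ := by simpa using hnew e₁ he₁ (by simp [h₁])
    · simp [h₁, huw, hvw] at h₃
    · simp [h₁, huv, huw] at h₂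

/-- every connected finite multigraph (loops and parallel edges allowed)
containing a loop or a 3-cycle contains a "maximal tree with 1- or 3-cycle":
a spanning tree `T` together with one extra edge `e` that is a loop or forms a
3-cycle with two edges of `T`. -/
theorem exists_maximal_tree_with_one_or_three_cycle
    {V E : Type} [Fintype V] [Nonempty V] [Fintype E]
    (ends : E → Sym2 V)
    (hconn : ConnectsAll ends (Set.univ : Set E))
    (hcyc : (∃ e : E, (ends e).IsDiag) ∨
      (∃ (u v w : V) (e₁ e₂ e₃ : E), u ≠ v ∧ v ≠ w ∧ u ≠ w ∧
        ends e₁ = s(u, v) ∧ ends e₂ = s(v, w) ∧ ends e₃ = s(w, u))) :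
    ∃ (T : Finset E) (e : E), e ∉ T ∧ IsSpanningTree ends T ∧
      ((ends e).IsDiag ∨ FormsThreeCycle ends T e) :=
  exists_maximal_tree_with_one_or_three_cycle_general ends hconn hcyc
end

section
/- Let G be a finite connected multigraph with r vertices and N edges, let C be its r × N vertex-edge incidence matrix (the (h,i) entry counting ends of edge i at vertex h, so loops contribute 2), and let E₁,...,E_N be vectors in Z^{2N} of rank N-r whose only real linear relations are Σ_i c_{hi} E_i = 0 for h = 1,...,r. If S is a maximal tree with 1- or 3-cycle in G, then the N - r vectors {E_i : e_i ∉ S} form an integer basis for the lattice Λ = Z-span{E₁,...,E_N} ⊂ Z^{2N}. -/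
/-- The vertex-edge incidence number: the number of ends of edge `e` at vertex `v`
(so a loop at `v` contributes `2`). -/
def inc {V E : Type} [DecidableEq V] (ends : E → Sym2 V) (v : V) (e : E) : ℤ :=
  if v ∈ ends e then (if (ends e).IsDiag then 2 else 1) else 0

/-! ### Auxiliary lemmas -/

lemma sym2_cases {V : Type} (s : Sym2 V) : ∃ a b, s = s(a, b) := by
  induction s using Sym2.ind with
  | _ a b => exact ⟨a, b, rfl⟩

lemma sum_inc {V E : Type} [Fintype V] [DecidableEq V] (ends : E → Sym2 V) (e : E)
    (z : V → ℚ) (a b : V) (h : ends e = s(a, b)) :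
    ∑ v, z v * (inc ends v e : ℚ) = if a = b then 2 * z a else z a + z b := by
  unfold inc
  by_cases hab : a = b
  · subst hab
    rw [if_pos rfl]
    have : ∀ v, z v * ((if v ∈ ends e then (if (ends e).IsDiag then 2 else 1) else 0 : ℤ) : ℚ)
        = if v = a then 2 * z v else 0 := by
      intro v
      rw [h]
      by_cases hv : v = a
      · simp [hv, Sym2.mk_isDiag_iff, mul_comm]
      · simp [Sym2.mem_iff, hv]
    rw [Finset.sum_congr rfl fun v _ => this v]
    simp
  · rw [if_neg hab]
    have : ∀ v, z v * ((if v ∈ ends e then (if (ends e).IsDiag then 2 else 1) else 0 : ℤ) : ℚ)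
        = (if v = a then z v else 0) + (if v = b then z v else 0) := by
      intro v
      rw [h]
      by_cases hva : v = a
      · subst hva
        simp [Sym2.mem_iff, Sym2.mk_isDiag_iff, hab, fun h' : v = b => hab h']
      · by_cases hvb : v = b
        · subst hvb
          simp [Sym2.mem_iff, Sym2.mk_isDiag_iff, hab, hva]
        · simp [Sym2.mem_iff, hva, hvb]
    rw [Finset.sum_congr rfl fun v _ => this v]
    rw [Finset.sum_add_distrib]
    simp

lemma propagate {V E : Type} {ends : E → Sym2 V} {S : Set E} {Q : V → Prop}
    (hstep : ∀ u v, EdgeStep ends S u v → Q u → Q v) {x y : V}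
    (h : Relation.ReflTransGen (EdgeStep ends S) x y) (hx : Q x) : Q y := by
  induction h with
  | refl => exact hx
  | tail _ h₂ ih => exact hstep _ _ h₂ ih

/-- Coordinatewise cast `ℤ → ℝ` as a `ℤ`-linear map. -/
def castMap (n : ℕ) : (Fin n → ℤ) →ₗ[ℤ] (Fin n → ℝ) where
  toFun x := fun i => (x i : ℝ)
  map_add' x y := by funext i; push_cast; simp
  map_smul' m x := by funext i; push_cast; simp

/-- Every vector attached to an edge of `S = T ∪ {e₀}` is an integral combination of the
vectors attached to edges outside `S`. -/
lemma key_mem {V E : Type} [Fintype V] [DecidableEq V] [Nonempty V] [Fintype E] [DecidableEq E]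
    (ends : E → Sym2 V) (Ev : E → (Fin (2 * Fintype.card E) → ℤ))
    (hrel : ∀ v : V, ∑ e : E, inc ends v e • Ev e = 0)
    (T : Finset E) (e₀ : E) (he₀ : e₀ ∉ T) (hT : IsSpanningTree ends T)
    (hcyc : (ends e₀).IsDiag ∨ FormsThreeCycle ends T e₀)
    (f : E) (hf : f ∈ insert e₀ T) :
    ∃ c : E → ℤ, Ev f = ∑ e ∈ (insert e₀ T)ᶜ, c e • Ev e := by
  classical
  let Φ : (V → ℚ) →ₗ[ℚ] (↥(insert e₀ T) → ℚ) :=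
    { toFun := fun z g => ∑ v, z v * (inc ends v g.1 : ℚ)
      map_add' := by intro x y; funext g; simp [add_mul, Finset.sum_add_distrib]
      map_smul' := by intro m x; funext g; simp [Finset.mul_sum, mul_assoc] }
  have hinj : Function.Injective Φ := by
    rw [← LinearMap.ker_eq_bot, LinearMap.ker_eq_bot']
    intro z hz
    have hrelz : ∀ g ∈ insert e₀ T, ∑ v, z v * (inc ends v g : ℚ) = 0 := by
      intro g hg; exact congrFun hz ⟨g, hg⟩
    have hstep : ∀ u v, EdgeStep ends (↑T) u v → z u = 0 → z v = 0 := by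
      rintro u v ⟨e, heT, hee⟩ hu
      have h := hrelz e (Finset.mem_insert_of_mem heT)
      rw [sum_inc ends e z u v hee] at h
      by_cases huv : u = v
      · rw [← huv]; exact hu
      · rw [if_neg huv] at h; linarith
    obtain ⟨x, hx⟩ : ∃ x, z x = 0 := by
      rcases hcyc with hloop | ⟨u, v, w, huv, hvw, huw, he0, e₁, he₁T, e₂, he₂T, h1, h2⟩
      · obtain ⟨a, b, hab⟩ := sym2_cases (ends e₀)
        have hd : a = b := by rw [hab, Sym2.mk_isDiag_iff] at hloop; exact hloop
        have h := hrelz e₀ (Finset.mem_insert_self _ _)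
        rw [sum_inc ends e₀ z a b hab, if_pos hd] at h
        exact ⟨a, by linarith⟩
      · have h0 := hrelz e₀ (Finset.mem_insert_self _ _)
        rw [sum_inc ends e₀ z u v he0, if_neg huv] at h0
        have hh1 := hrelz e₁ (Finset.mem_insert_of_mem he₁T)
        rw [sum_inc ends e₁ z v w h1, if_neg hvw] at hh1
        have hh2 := hrelz e₂ (Finset.mem_insert_of_mem he₂T)
        rw [sum_inc ends e₂ z w u h2, if_neg (fun h => huw h.symm)] at hh2
        exact ⟨u, by linarith⟩
    funext v
    exact propagate hstep (hT.1 x v) hx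
  have hfr : Module.finrank ℚ (V → ℚ) = Module.finrank ℚ (↥(insert e₀ T) → ℚ) := by
    rw [Module.finrank_pi, Module.finrank_pi, Fintype.card_coe,
      Finset.card_insert_of_notMem he₀, hT.2]
    have : 1 ≤ Fintype.card V := Fintype.card_pos
    omega
  obtain ⟨z, hz⟩ := (LinearMap.injective_iff_surjective_of_finrank_eq_finrank hfr).mp hinj
    (fun g => if g.1 = f then 1 else 0)
  have hzS : ∀ g ∈ insert e₀ T, ∑ v, z v * (inc ends v g : ℚ) = if g = f then 1 else 0 := by
    intro g hg; exact congrFun hz ⟨g, hg⟩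
  obtain ⟨x₀, m₀, hx₀⟩ : ∃ x : V, ∃ m : ℤ, 2 * z x = (m : ℚ) := by
    rcases hcyc with hloop | ⟨u, v, w, huv, hvw, huw, he0, e₁, he₁T, e₂, he₂T, h1, h2⟩
    · obtain ⟨a, b, hab⟩ := sym2_cases (ends e₀)
      have hd : a = b := by rw [hab, Sym2.mk_isDiag_iff] at hloop; exact hloop
      have h := hzS e₀ (Finset.mem_insert_self _ _)
      rw [sum_inc ends e₀ z a b hab, if_pos hd] at h
      refine ⟨a, if e₀ = f then 1 else 0, ?_⟩
      rw [h]; split <;> norm_num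
    · have h0 := hzS e₀ (Finset.mem_insert_self _ _)
      rw [sum_inc ends e₀ z u v he0, if_neg huv] at h0
      have hh1 := hzS e₁ (Finset.mem_insert_of_mem he₁T)
      rw [sum_inc ends e₁ z v w h1, if_neg hvw] at hh1
      have hh2 := hzS e₂ (Finset.mem_insert_of_mem he₂T)
      rw [sum_inc ends e₂ z w u h2, if_neg (fun h => huw h.symm)] at hh2
      refine ⟨u, (if e₀ = f then 1 else 0) - (if e₁ = f then 1 else 0)
        + (if e₂ = f then 1 else 0), ?_⟩
      push_cast
      split_ifs at h0 hh1 hh2 ⊢ <;> linarith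
  have hP : ∀ v, ∃ m : ℤ, 2 * z v = (m : ℚ) ∧ Even (m - m₀) := by
    intro v
    refine propagate (Q := fun u => ∃ m : ℤ, 2 * z u = (m : ℚ) ∧ Even (m - m₀)) ?_
      (hT.1 x₀ v) ⟨m₀, hx₀, by simp⟩
    rintro a b ⟨e, heT, hee⟩ ⟨m, hm, k, hk⟩
    by_cases hab : a = b
    · exact ⟨m, hab ▸ hm, k, hk⟩
    · have h := hzS e (Finset.mem_insert_of_mem heT)
      rw [sum_inc ends e z a b hee, if_neg hab] at h
      have hdc : z a + z b = ((if e = f then 1 else 0 : ℤ) : ℚ) := by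
        rw [h]; split <;> norm_num
      refine ⟨2 * (if e = f then 1 else 0) - m, by push_cast; linarith,
        (if e = f then 1 else 0) - m₀ - k, by omega⟩
  have hint : ∀ e : E, ∃ m : ℤ, ∑ v, z v * (inc ends v e : ℚ) = (m : ℚ) := by
    intro e
    obtain ⟨a, b, hab⟩ := sym2_cases (ends e)
    rw [sum_inc ends e z a b hab]
    by_cases h : a = b
    · rw [if_pos h]; obtain ⟨m, hm, _⟩ := hP a; exact ⟨m, hm⟩
    · rw [if_neg h]
      obtain ⟨ma, hma, ka, hka⟩ := hP a
      obtain ⟨mb, hmb, kb, hkb⟩ := hP b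
      refine ⟨ka + kb + m₀, ?_⟩
      have e1 : (ma : ℚ) = (ka : ℚ) + ka + m₀ := by
        have h' : ma = ka + ka + m₀ := by omega
        rw [h']; push_cast; ring
      have e2 : (mb : ℚ) = (kb : ℚ) + kb + m₀ := by
        have h' : mb = kb + kb + m₀ := by omega
        rw [h']; push_cast; ring
      push_cast
      linarith
  choose c hc using hint
  have hcS : ∀ g ∈ insert e₀ T, (c g : ℚ) = if g = f then 1 else 0 := fun g hg => by
    rw [← hc g, hzS g hg]
  have hrelv : ∀ v, ∑ e : E, (inc ends v e : ℚ) • (fun i => (Ev e i : ℚ)) = 0 := by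
    intro v
    funext i
    have h := congrFun (hrel v) i
    simp only [Finset.sum_apply, Pi.smul_apply, smul_eq_mul, Pi.zero_apply] at h ⊢
    exact_mod_cast h
  have hrelQ : ∑ e : E, (c e : ℚ) • (fun i => (Ev e i : ℚ)) = 0 := by
    calc ∑ e : E, (c e : ℚ) • (fun i => (Ev e i : ℚ))
        = ∑ e : E, ∑ v, (z v * (inc ends v e : ℚ)) • (fun i => (Ev e i : ℚ)) := by
          refine Finset.sum_congr rfl fun e _ => ?_
          rw [← Finset.sum_smul, hc e]
      _ = ∑ v, ∑ e : E, (z v * (inc ends v e : ℚ)) • (fun i => (Ev e i : ℚ)) :=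
          Finset.sum_comm
      _ = ∑ v, z v • ∑ e : E, (inc ends v e : ℚ) • (fun i => (Ev e i : ℚ)) := by
          refine Finset.sum_congr rfl fun v _ => ?_
          rw [Finset.smul_sum]
          exact Finset.sum_congr rfl fun e _ => mul_smul _ _ _
      _ = 0 := by simp [hrelv]
  have hrelZ : ∑ e : E, c e • Ev e = 0 := by
    funext i
    have h := congrFun hrelQ i
    simp only [Finset.sum_apply, Pi.smul_apply, smul_eq_mul, Pi.zero_apply] at h ⊢
    exact_mod_cast h
  have hsplit := Finset.sum_add_sum_compl (insert e₀ T) (fun e => c e • Ev e)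
  have hSfsum : ∑ e ∈ insert e₀ T, c e • Ev e = Ev f := by
    rw [Finset.sum_eq_single f]
    · have h1 : c f = 1 := by
        have := hcS f hf; rw [if_pos rfl] at this; exact_mod_cast this
      rw [h1, one_smul]
    · intro g hg hgf
      have h0 : c g = 0 := by
        have := hcS g hg; rw [if_neg hgf] at this; exact_mod_cast this
      rw [h0, zero_smul]
    · intro hff; exact absurd hf hff
  refine ⟨fun e => -c e, ?_⟩
  have h2 : Ev f + ∑ e ∈ (insert e₀ T)ᶜ, c e • Ev e = 0 := by
    rw [← hSfsum, hsplit, hrelZ]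
  rw [eq_neg_of_add_eq_zero_left h2, ← Finset.sum_neg_distrib]
  exact Finset.sum_congr rfl fun e _ => (neg_smul _ _).symm

/-- let `G` be a finite connected multigraph with `r` vertices and `N`
edges, `C` its incidence matrix, and `E₁,…,E_N ∈ ℤ^{2N}` vectors whose real span has
dimension `N - r` and whose only real linear relations come from the rows of `C`.
If `S = T ∪ {e₀}` is a maximal tree with 1- or 3-cycle, then the vectors `E_i` for
`e_i ∉ S` form an integer basis of the lattice `Λ = ℤ-span{E₁,…,E_N}`. -/
theorem integer_basis_from_tree_with_cycle
    {V E : Type} [Fintype V] [DecidableEq V] [Nonempty V] [Fintype E] [DecidableEq E]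
    (ends : E → Sym2 V)
    (Ev : E → (Fin (2 * Fintype.card E) → ℤ))
    (hconn : ConnectsAll ends (Set.univ : Set E))
    (hrel : ∀ v : V, ∑ e : E, inc ends v e • Ev e = 0)
    (hrank : Module.finrank ℝ
        ↥(Submodule.span ℝ (Set.range fun e => fun i => ((Ev e i : ℝ)))) =
      Fintype.card E - Fintype.card V)
    (honly : ∀ y : E → ℝ, (∑ e : E, y e • (fun i => ((Ev e i : ℝ)))) = 0 →
      y ∈ Submodule.span ℝ (Set.range fun v : V => fun e : E => (inc ends v e : ℝ)))
    (T : Finset E) (e₀ : E) (he₀ : e₀ ∉ T)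
    (hT : IsSpanningTree ends T)
    (hcyc : (ends e₀).IsDiag ∨ FormsThreeCycle ends T e₀) :
    Submodule.span ℤ (Ev '' {e : E | e ∉ insert e₀ T}) =
        Submodule.span ℤ (Set.range Ev) ∧
      LinearIndependent ℤ (fun e : {e : E // e ∉ insert e₀ T} => Ev e.1) := by
  classical
  have key := key_mem ends Ev hrel T e₀ he₀ hT hcyc
  have hcardV : 1 ≤ Fintype.card V := Fintype.card_pos
  have hcardS : (insert e₀ T).card = Fintype.card V := by
    rw [Finset.card_insert_of_notMem he₀, hT.2]; omega
  have hNV : Fintype.card V ≤ Fintype.card E := by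
    rw [← hcardS]; exact Finset.card_le_univ (insert e₀ T)
  constructor
  · refine le_antisymm (Submodule.span_mono (Set.image_subset_range _ _)) ?_
    rw [Submodule.span_le]
    rintro x ⟨e, rfl⟩
    by_cases he : e ∈ insert e₀ T
    · obtain ⟨c, hcv⟩ := key e he
      rw [hcv]
      exact Submodule.sum_mem _ fun g hg =>
        Submodule.smul_mem _ _ (Submodule.subset_span ⟨g, Finset.mem_compl.mp hg, rfl⟩)
    · exact Submodule.subset_span ⟨e, he, rfl⟩
  · have hspanR : Submodule.span ℝ ((fun e => fun i => ((Ev e i : ℝ))) '' {e : E | e ∉ insert e₀ T})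
        = Submodule.span ℝ (Set.range fun e => fun i => ((Ev e i : ℝ))) := by
      refine le_antisymm (Submodule.span_mono (Set.image_subset_range _ _)) ?_
      rw [Submodule.span_le]
      rintro x ⟨e, rfl⟩
      by_cases he : e ∈ insert e₀ T
      · obtain ⟨c, hcv⟩ := key e he
        have hR : (fun i => ((Ev e i : ℝ)))
            = ∑ g ∈ (insert e₀ T)ᶜ, (c g : ℝ) • (fun i => ((Ev g i : ℝ))) := by
          funext i
          have h := congrFun hcv i
          simp only [Finset.sum_apply, Pi.smul_apply, smul_eq_mul] at h ⊢
          exact_mod_cast h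
        beta_reduce
        rw [hR]
        exact Submodule.sum_mem _ fun g hg =>
          Submodule.smul_mem _ _ (Submodule.subset_span ⟨g, Finset.mem_compl.mp hg, rfl⟩)
      · exact Submodule.subset_span ⟨e, he, rfl⟩
    have hcardsub : Fintype.card {e : E // e ∉ insert e₀ T}
        = Fintype.card E - Fintype.card V := by
      rw [Fintype.card_subtype_compl, ← hcardS]
      congr 1
      exact Fintype.card_coe _
    have hb : LinearIndependent ℝ
        (fun e : {e : E // e ∉ insert e₀ T} => (fun i => ((Ev e.1 i : ℝ)))) := by
      rw [linearIndependent_iff_card_eq_finrank_span]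
      have hrange : (Set.range fun e : {e : E // e ∉ insert e₀ T} => (fun i => ((Ev e.1 i : ℝ))))
          = (fun e => fun i => ((Ev e i : ℝ))) '' {e : E | e ∉ insert e₀ T} := by
        rw [show (fun e : {e : E // e ∉ insert e₀ T} => (fun i => ((Ev e.1 i : ℝ))))
            = (fun e => fun i => ((Ev e i : ℝ))) ∘ (Subtype.val) from rfl,
          Set.range_comp, Subtype.range_coe_subtype]
      rw [hcardsub, hrange, Set.finrank, hspanR, hrank]
    have hbZ : LinearIndependent ℤ
        (fun e : {e : E // e ∉ insert e₀ T} => (fun i => ((Ev e.1 i : ℝ)))) := by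
      refine hb.restrict_scalars ?_
      intro a b h
      simpa using h
    exact LinearIndependent.of_comp (castMap (2 * Fintype.card E)) hbZ
end
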